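/- arXiv:2012.02864 — 8 statements merged into one kernel-verified Lean document; each statement's English description precedes it below -/
import Mathlib

section
/- Let υ₀, σ_s, σ_f, L > 0 with θ := υ₀/(2Lσ_s) > 1, and let x_* > 0 satisfy sinh(x_*) = θ·x_*. Define λ_* := σ_f − σ_s − √(σ_s² + (υ₀x_*/(2L))²), φ(r) := sinh(½x_*(1 − r/L)) / sinh(½x_*), f₊(r) := φ(r) and f₋(r) := φ(−r). Then (f₊, f₋) solves the one-dimensional slab reactor eigenvalue problem with parameters υ₀, σ_s, σ_f, L and eigenvalue λ = λ_*: the ODE system holds for all r ∈ (−L, L), the boundary conditions f₊(L) = 0 and f₋(−L) = 0 hold, and f₊(r) > 0 and f₋(r) > 0 for all r ∈ (−L, L). -/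
/-- The ODE system of the one-dimensional slab reactor eigenvalue problem with
parameters `υ₀, σs, σf, L` and eigenvalue `lam`. -/
def SlabODE (υ₀ σs σf L lam : ℝ) (fp fm : ℝ → ℝ) : Prop :=
  ∀ r ∈ Set.Ioo (-L) L,
    HasDerivAt fp ((1 / υ₀) * ((lam - σf + σs) * fp r - σs * fm r)) r ∧
    HasDerivAt fm ((1 / υ₀) * (σs * fp r - (lam - σf + σs) * fm r)) r

/-!
With `s = x_*/2 · (1 - r/L)` one has `φ(-r) = sinh(x_* - s) / sinh(x_*/2)`, so the addition
formula gives `cosh x_* · φ(r) + φ(-r) = sinh x_* · cosh s / sinh(x_*/2)`. The fixed-point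
equation turns `σ_s sinh x_*` into `υ₀ x_*/(2L)` and `√(σ_s² + (υ₀x_*/(2L))²)` into
`σ_s cosh x_*`, after which the first equation of the system is exactly
`υ₀ φ' = -σ_s (cosh x_* · φ(r) + φ(-r))`. The second equation is the first one read at `-r`.
-/

open Real

theorem neg_mem_Ioo_neg_self {L r : ℝ} (hr : r ∈ Set.Ioo (-L) L) : -r ∈ Set.Ioo (-L) L :=
  ⟨neg_lt_neg hr.2, neg_lt.1 hr.1⟩

theorem slabODE_of_reflect {υ₀ σs σf L lam : ℝ} {φ : ℝ → ℝ}
    (h : ∀ r ∈ Set.Ioo (-L) L,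
      HasDerivAt φ ((1 / υ₀) * ((lam - σf + σs) * φ r - σs * φ (-r))) r) :
    SlabODE υ₀ σs σf L lam φ (fun r => φ (-r)) := by
  intro r hr
  refine ⟨h r hr, ((h (-r) (neg_mem_Ioo_neg_self hr)).comp r (hasDerivAt_neg r)).congr_deriv ?_⟩
  rw [neg_neg]
  ring

theorem sqrt_sq_add_mul_sinh_sq {σ : ℝ} (hσ : 0 ≤ σ) (x : ℝ) :
    √(σ ^ 2 + (σ * sinh x) ^ 2) = σ * cosh x := by
  rw [← sqrt_sq (by positivity : 0 ≤ σ * cosh x), mul_pow, mul_pow, cosh_sq]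
  ring_nf

theorem hasDerivAt_sinh_profile {υ₀ σ L x : ℝ} (hυ₀ : υ₀ ≠ 0)
    (hx : σ * sinh x = υ₀ * x / (2 * L)) (k r : ℝ) :
    HasDerivAt (fun r => sinh (x / 2 * (1 - r / L)) / k)
      ((1 / υ₀) * (-σ * cosh x * (sinh (x / 2 * (1 - r / L)) / k)
        - σ * (sinh (x / 2 * (1 - -r / L)) / k))) r := by
  have hderiv : HasDerivAt (fun r => x / 2 * (1 - r / L)) (x / 2 * (0 - 1 / L)) r :=
    ((hasDerivAt_const r 1).sub ((hasDerivAt_id r).div_const L)).const_mul (x / 2)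
  refine (hderiv.sinh.div_const k).congr_deriv ?_
  have hreflect : x / 2 * (1 - -r / L) = x - x / 2 * (1 - r / L) := by ring
  have hx' : σ * sinh x / υ₀ = x / (2 * L) := by rw [hx]; field_simp
  rw [hreflect, sinh_sub]
  linear_combination (cosh (x / 2 * (1 - r / L)) / k) * hx'

theorem sinh_profile_pos {x L r : ℝ} (hx : 0 < x) (hr : r ∈ Set.Ioo (-L) L) :
    0 < sinh (x / 2 * (1 - r / L)) := by
  have hL : 0 < L := by linarith [hr.1, hr.2]
  have : r / L < 1 := (div_lt_one hL).2 hr.2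
  exact sinh_pos_iff.2 (mul_pos (by positivity) (by linarith))

theorem slab_theta_gt_one_general (υ₀ σs σf L : ℝ)
    (hυ₀ : 0 < υ₀) (hσs : 0 < σs) (hL : 0 < L)
    (xs : ℝ) (hxs : 0 < xs)
    (hfix : Real.sinh xs = (υ₀ / (2 * L * σs)) * xs)
    (lam : ℝ) (hlam : lam = σf - σs - Real.sqrt (σs ^ 2 + (υ₀ * xs / (2 * L)) ^ 2))
    (φ : ℝ → ℝ) (hφ : ∀ r, φ r = Real.sinh (xs / 2 * (1 - r / L)) / Real.sinh (xs / 2))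
    (fp fm : ℝ → ℝ) (hfp : ∀ r, fp r = φ r) (hfm : ∀ r, fm r = φ (-r)) :
    SlabODE υ₀ σs σf L lam fp fm ∧
    fp L = 0 ∧ fm (-L) = 0 ∧
    ∀ r ∈ Set.Ioo (-L) L, 0 < fp r ∧ 0 < fm r := by
  obtain rfl : fp = φ := funext hfp
  obtain rfl : fm = fun r => fp (-r) := funext hfm
  obtain rfl := funext hφ
  have hσsinh : σs * sinh xs = υ₀ * xs / (2 * L) := by rw [hfix]; field_simp
  have heig : lam - σf + σs = -σs * cosh xs := by
    rw [hlam, ← hσsinh, sqrt_sq_add_mul_sinh_sq hσs.le]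
    ring
  have hnorm : 0 < sinh (xs / 2) := sinh_pos_iff.2 (by positivity)
  refine ⟨slabODE_of_reflect fun r _ => ?_, by simp [hL.ne'], by simp [hL.ne'],
    fun r hr => ⟨?_, ?_⟩⟩
  · rw [heig]
    exact hasDerivAt_sinh_profile hυ₀.ne' hσsinh _ r
  · exact div_pos (sinh_profile_pos hxs hr) hnorm
  · exact div_pos (sinh_profile_pos hxs (neg_mem_Ioo_neg_self hr)) hnorm

/-- Solution of the slab reactor eigenvalue problem in the case `θ > 1`. -/
theorem slab_theta_gt_one (υ₀ σs σf L : ℝ)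
    (hυ₀ : 0 < υ₀) (hσs : 0 < σs) (hσf : 0 < σf) (hL : 0 < L)
    (hθ : 1 < υ₀ / (2 * L * σs))
    (xs : ℝ) (hxs : 0 < xs)
    (hfix : Real.sinh xs = (υ₀ / (2 * L * σs)) * xs)
    (lam : ℝ) (hlam : lam = σf - σs - Real.sqrt (σs ^ 2 + (υ₀ * xs / (2 * L)) ^ 2))
    (φ : ℝ → ℝ) (hφ : ∀ r, φ r = Real.sinh (xs / 2 * (1 - r / L)) / Real.sinh (xs / 2))
    (fp fm : ℝ → ℝ) (hfp : ∀ r, fp r = φ r) (hfm : ∀ r, fm r = φ (-r)) :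
    SlabODE υ₀ σs σf L lam fp fm ∧
    fp L = 0 ∧ fm (-L) = 0 ∧
    ∀ r ∈ Set.Ioo (-L) L, 0 < fp r ∧ 0 < fm r :=
  slab_theta_gt_one_general υ₀ σs σf L hυ₀ hσs hL xs hxs hfix lam hlam φ hφ fp fm hfp hfm
end

section
/- Let υ₀, σ_s, σ_f, L > 0 with υ₀ = 2Lσ_s. Define λ_* := σ_f − 2σ_s, f₊(r) := 1 − r/L and f₋(r) := 1 + r/L. Then (f₊, f₋) solves the one-dimensional slab reactor eigenvalue problem with parameters υ₀, σ_s, σ_f, L and eigenvalue λ = λ_*: the ODE system holds for all r ∈ (−L, L), the boundary conditions f₊(L) = 0 and f₋(−L) = 0 hold, and f₊(r) > 0 and f₋(r) > 0 for all r ∈ (−L, L). -/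
/-! With `λ = σf - 2σs` the coefficient `λ - σf + σs` is `-σs`, so both right-hand sides equal
`∓(σs / υ₀) (f₊ + f₋) = ∓2σs / υ₀` for the linear profiles, whose sum is `2`; the critical relation
`υ₀ = 2Lσs` turns this into `∓1 / L`, which are exactly their slopes. -/

theorem slabODE_linear_profiles {υ₀ σs L : ℝ} (σf : ℝ) (hσs : σs ≠ 0) (hL : L ≠ 0)
    (hθ : υ₀ = 2 * L * σs) :
    SlabODE υ₀ σs σf L (σf - 2 * σs) (fun r => 1 - r / L) (fun r => 1 + r / L) := by
  intro r _
  have hslope : 1 / υ₀ * (2 * σs) = 1 / L := by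
    rw [hθ]
    field_simp
  constructor
  · refine (((hasDerivAt_id' r).div_const L).const_sub 1).congr_deriv ?_
    linear_combination hslope
  · refine (((hasDerivAt_id' r).div_const L).const_add 1).congr_deriv ?_
    linear_combination -hslope

theorem linear_profiles_pos {L r : ℝ} (hL : 0 < L) (hr : r ∈ Set.Ioo (-L) L) :
    0 < 1 - r / L ∧ 0 < 1 + r / L := by
  obtain ⟨hlo, hhi⟩ := hr
  have habs : |r / L| < 1 := by
    rw [abs_div, abs_of_pos hL, div_lt_one hL]
    exact abs_lt.2 ⟨hlo, hhi⟩
  constructor <;> linarith [abs_lt.1 habs]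

theorem slab_theta_eq_one_general (υ₀ σs σf L : ℝ)
    (hσs : 0 < σs) (hL : 0 < L)
    (hθ : υ₀ = 2 * L * σs)
    (lam : ℝ) (hlam : lam = σf - 2 * σs)
    (fp fm : ℝ → ℝ) (hfp : ∀ r, fp r = 1 - r / L) (hfm : ∀ r, fm r = 1 + r / L) :
    SlabODE υ₀ σs σf L lam fp fm ∧
    fp L = 0 ∧ fm (-L) = 0 ∧
    ∀ r ∈ Set.Ioo (-L) L, 0 < fp r ∧ 0 < fm r := by
  obtain rfl : fp = fun r => 1 - r / L := funext hfp
  obtain rfl : fm = fun r => 1 + r / L := funext hfm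
  subst hlam
  refine ⟨slabODE_linear_profiles σf hσs.ne' hL.ne' hθ, ?_, ?_, fun r hr => linear_profiles_pos hL hr⟩
  · simp [hL.ne']
  · simp [hL.ne']

/-- Solution of the slab reactor eigenvalue problem in the critical case `θ = 1`. -/
theorem slab_theta_eq_one (υ₀ σs σf L : ℝ)
    (hυ₀ : 0 < υ₀) (hσs : 0 < σs) (hσf : 0 < σf) (hL : 0 < L)
    (hθ : υ₀ = 2 * L * σs)
    (lam : ℝ) (hlam : lam = σf - 2 * σs)
    (fp fm : ℝ → ℝ) (hfp : ∀ r, fp r = 1 - r / L) (hfm : ∀ r, fm r = 1 + r / L) :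
    SlabODE υ₀ σs σf L lam fp fm ∧
    fp L = 0 ∧ fm (-L) = 0 ∧
    ∀ r ∈ Set.Ioo (-L) L, 0 < fp r ∧ 0 < fm r :=
  slab_theta_eq_one_general υ₀ σs σf L hσs hL hθ lam hlam fp fm hfp hfm
end

section
/- Let υ₀, σ_s, σ_f, L > 0 with θ := υ₀/(2Lσ_s) < 1, and let x_* ∈ (0, π) satisfy sin(x_*) = θ·x_*. Set μ := υ₀x_*/(2L). Then μ ≤ σ_s, and defining λ_* := σ_f − σ_s − s·√(σ_s² − μ²) where s = 1 if cos(x_*) > 0, s = 0 if cos(x_*) = 0, and s = −1 if cos(x_*) < 0, φ(r) := sin(½x_*(1 − r/L)) / sin(½x_*), f₊(r) := φ(r) and f₋(r) := φ(−r), the pair (f₊, f₋) solves the one-dimensional slab reactor eigenvalue problem with parameters υ₀, σ_s, σ_f, L and eigenvalue λ = λ_*: the ODE system holds for all r ∈ (−L, L), the boundary conditions f₊(L) = 0 and f₋(−L) = 0 hold, and f₊(r) > 0 and f₋(r) > 0 for all r ∈ (−L, L). -/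
open Real Set

lemma Real.sign_mul_abs (x : ℝ) : Real.sign x * |x| = x := by
  rcases lt_trichotomy x 0 with hx | rfl | hx
  · rw [Real.sign_of_neg hx, abs_of_neg hx]; ring
  · simp
  · rw [Real.sign_of_pos hx, abs_of_pos hx]; ring

lemma Real.sign_cos_mul_sqrt_sq_sub_sq_mul_sin {σ : ℝ} (hσ : 0 ≤ σ) (x : ℝ) :
    Real.sign (cos x) * √(σ ^ 2 - (σ * sin x) ^ 2) = σ * cos x := by
  have hsq : σ ^ 2 - (σ * sin x) ^ 2 = (σ * cos x) ^ 2 := by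
    linear_combination (-σ ^ 2) * sin_sq_add_cos_sq x
  rw [hsq, sqrt_sq_eq_abs, abs_mul, abs_of_nonneg hσ, mul_left_comm, Real.sign_mul_abs]

lemma Real.cos_two_mul_mul_sin_sub_add_sin_add (a u : ℝ) :
    cos (2 * a) * sin (a - u) + sin (a + u) = sin (2 * a) * cos (a - u) := by
  rw [sin_add, sin_sub, cos_sub, sin_two_mul, cos_two_mul]
  linear_combination (-2 * cos a * sin u) * sin_sq_add_cos_sq a

lemma Real.sin_sub_add_cos_two_mul_mul_sin_add (a u : ℝ) :
    sin (a - u) + cos (2 * a) * sin (a + u) = sin (2 * a) * cos (a + u) := by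
  simpa only [sub_neg_eq_add, ← sub_eq_add_neg, add_comm] using
    cos_two_mul_mul_sin_sub_add_sin_add a (-u)

lemma slabODE_sin_div {υ₀ σs σf L lam a k : ℝ} (c : ℝ) (hυ₀ : υ₀ ≠ 0)
    (hk : σs * sin (2 * a) = υ₀ * k) (hlam : lam - σf + σs = -(σs * cos (2 * a))) :
    SlabODE υ₀ σs σf L lam (fun r => sin (a - k * r) / c) (fun r => sin (a + k * r) / c) := by
  intro r _
  have hlin (s : ℝ) : HasDerivAt (fun r => a + s * k * r) (s * k) r := by
    simpa using ((hasDerivAt_id r).const_mul (s * k)).const_add a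
  have hp := ((hlin (-1)).sin).div_const c
  have hm := ((hlin 1).sin).div_const c
  simp only [neg_mul, ← sub_eq_add_neg, one_mul] at hp hm
  have hk' : σs * sin (2 * a) / υ₀ = k := by rw [hk]; field_simp
  refine ⟨hp.congr_deriv ?_, hm.congr_deriv ?_⟩ <;> rw [hlam]
  · linear_combination (σs / (υ₀ * c)) * cos_two_mul_mul_sin_sub_add_sin_add a (k * r) +
      (cos (a - k * r) / c) * hk'
  · linear_combination (-σs / (υ₀ * c)) * sin_sub_add_cos_two_mul_mul_sin_add a (k * r) -
      (cos (a + k * r) / c) * hk'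

lemma sin_half_mul_one_sub_div_pos {x L r : ℝ} (hx : x ∈ Ioo 0 π) (hL : 0 < L)
    (hr : r ∈ Ioo (-L) L) : 0 < sin (x / 2 * (1 - r / L)) / sin (x / 2) := by
  obtain ⟨hx0, hxπ⟩ := hx
  have hrL : r / L ∈ Ioo (-1) 1 :=
    ⟨by rw [lt_div_iff₀ hL]; linarith [hr.1], by rw [div_lt_one hL]; exact hr.2⟩
  apply div_pos <;> apply sin_pos_of_pos_of_lt_pi
  · nlinarith [hrL.2]
  · nlinarith [hrL.1]
  · linarith
  · linarith

theorem slab_theta_lt_one_general (υ₀ σs σf L : ℝ)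
    (hυ₀ : 0 < υ₀) (hσs : 0 < σs) (hL : 0 < L)
    (xs : ℝ) (hxs : xs ∈ Set.Ioo 0 Real.pi)
    (hfix : Real.sin xs = (υ₀ / (2 * L * σs)) * xs)
    (μ : ℝ) (hμ : μ = υ₀ * xs / (2 * L))
    (lam : ℝ)
    (hlam : lam = σf - σs - Real.sign (Real.cos xs) * Real.sqrt (σs ^ 2 - μ ^ 2))
    (φ : ℝ → ℝ) (hφ : ∀ r, φ r = Real.sin (xs / 2 * (1 - r / L)) / Real.sin (xs / 2))
    (fp fm : ℝ → ℝ) (hfp : ∀ r, fp r = φ r) (hfm : ∀ r, fm r = φ (-r)) :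
    μ ≤ σs ∧
    SlabODE υ₀ σs σf L lam fp fm ∧
    fp L = 0 ∧ fm (-L) = 0 ∧
    ∀ r ∈ Set.Ioo (-L) L, 0 < fp r ∧ 0 < fm r := by
  have hxs2 : 2 * (xs / 2) = xs := by ring
  have hk : σs * sin (2 * (xs / 2)) = υ₀ * (xs / (2 * L)) := by
    rw [hxs2, hfix]; field_simp
  have hμσ : μ = σs * sin xs := by rw [hμ, ← hxs2, hk]; ring
  have hlam' : lam - σf + σs = -(σs * cos (2 * (xs / 2))) := by
    rw [hlam, hμσ, Real.sign_cos_mul_sqrt_sq_sub_sq_mul_sin hσs.le, hxs2]; ring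
  have hfp' : fp = fun r => sin (xs / 2 - xs / (2 * L) * r) / sin (xs / 2) :=
    funext fun r => by rw [hfp, hφ]; ring_nf
  have hfm' : fm = fun r => sin (xs / 2 + xs / (2 * L) * r) / sin (xs / 2) :=
    funext fun r => by rw [hfm, hφ]; ring_nf
  refine ⟨by rw [hμσ]; nlinarith [sin_le_one xs], ?_, ?_, ?_, ?_⟩
  · rw [hfp', hfm']
    exact slabODE_sin_div _ hυ₀.ne' hk hlam'
  · rw [hfp, hφ, div_self hL.ne', sub_self, mul_zero, sin_zero, zero_div]
  · rw [hfm, hφ, neg_neg, div_self hL.ne', sub_self, mul_zero, sin_zero, zero_div]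
  · intro r hr
    rw [hfp, hfm, hφ, hφ]
    exact ⟨sin_half_mul_one_sub_div_pos hxs hL hr,
      sin_half_mul_one_sub_div_pos hxs hL ⟨neg_lt_neg hr.2, neg_lt.mp hr.1⟩⟩

/-- Solution of the slab reactor eigenvalue problem in the case `θ < 1`. -/
theorem slab_theta_lt_one (υ₀ σs σf L : ℝ)
    (hυ₀ : 0 < υ₀) (hσs : 0 < σs) (hσf : 0 < σf) (hL : 0 < L)
    (hθ : υ₀ / (2 * L * σs) < 1)
    (xs : ℝ) (hxs : xs ∈ Set.Ioo 0 Real.pi)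
    (hfix : Real.sin xs = (υ₀ / (2 * L * σs)) * xs)
    (μ : ℝ) (hμ : μ = υ₀ * xs / (2 * L))
    (lam : ℝ)
    (hlam : lam = σf - σs - Real.sign (Real.cos xs) * Real.sqrt (σs ^ 2 - μ ^ 2))
    (φ : ℝ → ℝ) (hφ : ∀ r, φ r = Real.sin (xs / 2 * (1 - r / L)) / Real.sin (xs / 2))
    (fp fm : ℝ → ℝ) (hfp : ∀ r, fp r = φ r) (hfm : ∀ r, fm r = φ (-r)) :
    μ ≤ σs ∧
    SlabODE υ₀ σs σf L lam fp fm ∧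
    fp L = 0 ∧ fm (-L) = 0 ∧
    ∀ r ∈ Set.Ioo (-L) L, 0 < fp r ∧ 0 < fm r :=
  slab_theta_lt_one_general υ₀ σs σf L hυ₀ hσs hL xs hxs hfix μ hμ lam hlam φ hφ fp fm hfp hfm
end

section
/- Let υ₀, σ_s, σ_f, L > 0, λ ∈ ℝ, α > 0 and C, C' ∈ ℝ \ {0}. Define f₊(r) := C(e^{−αr} − e^{αr − 2αL}) and f₋(r) := C'(e^{αr} − e^{−αr − 2αL}). If f₊ and f₋ satisfy the ODE system of the one-dimensional slab reactor eigenvalue problem with parameters υ₀, σ_s, σ_f, L and eigenvalue λ for all r ∈ (−L, L), then: (C/C')² = 1; (C'/C)·α/sinh(2αL) = σ_s/υ₀; and α·cosh(2αL)/sinh(2αL) = −(λ − σ_f + σ_s)/υ₀. -/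
open Real

noncomputable def expComb (α a b r : ℝ) : ℝ := a * exp (-(α * r)) + b * exp (α * r)

theorem hasDerivAt_expComb (α a b r : ℝ) :
    HasDerivAt (expComb α a b) (expComb α (-(α * a)) (α * b) r) r := by
  have hneg : HasDerivAt (fun r => exp (-(α * r))) (exp (-(α * r)) * -α) r := by
    simpa using ((hasDerivAt_id r).const_mul α).neg.exp
  have hpos : HasDerivAt (fun r => exp (α * r)) (exp (α * r) * α) r := by
    simpa using ((hasDerivAt_id r).const_mul α).exp
  unfold expComb
  exact ((hneg.const_mul a).add (hpos.const_mul b)).congr_deriv (by ring)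

theorem eq_zero_of_expComb_eq_zero {α a b : ℝ} {s : Set ℝ} (hs : s.Nontrivial) (hα : α ≠ 0)
    (h : ∀ r ∈ s, expComb α a b r = 0) : a = 0 ∧ b = 0 := by
  have hsq : ∀ r ∈ s, a + b * exp (α * r) ^ 2 = 0 := fun r hr => by
    have hr := congrArg (· * exp (α * r)) (h r hr)
    simp only [expComb, exp_neg] at hr
    field_simp at hr
    linear_combination hr
  obtain ⟨x, hx, y, hy, hxy⟩ := hs
  have hne : exp (α * x) ^ 2 ≠ exp (α * y) ^ 2 := by
    rw [Ne, pow_left_inj₀ (exp_pos _).le (exp_pos _).le two_ne_zero, exp_eq_exp,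
      mul_right_inj' hα]
    exact hxy
  have hb : b = 0 :=
    mul_right_cancel₀ (sub_ne_zero.2 hne) (by linear_combination hsq x hx - hsq y hy)
  exact ⟨by simpa [hb] using hsq x hx, hb⟩

theorem expComb_coeffs_of_hasDerivAt {α a b c d : ℝ} {s : Set ℝ} (hs : s.Nontrivial)
    (hα : α ≠ 0) (h : ∀ r ∈ s, HasDerivAt (expComb α a b) (expComb α c d r) r) :
    c = -(α * a) ∧ d = α * b := by
  have hdiff : ∀ r ∈ s, expComb α (c - -(α * a)) (d - α * b) r = 0 := fun r hr => by
    have := (h r hr).unique (hasDerivAt_expComb α a b r)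
    simp only [expComb] at this ⊢
    linear_combination this
  obtain ⟨hc, hd⟩ := eq_zero_of_expComb_eq_zero hs hα hdiff
  exact ⟨sub_eq_zero.1 hc, sub_eq_zero.1 hd⟩

theorem SlabODE.coeffs_of_expComb {υ₀ σs σf L lam α a₁ b₁ a₂ b₂ : ℝ} (hυ₀ : υ₀ ≠ 0)
    (hα : α ≠ 0) (hL : 0 < L)
    (h : SlabODE υ₀ σs σf L lam (expComb α a₁ b₁) (expComb α a₂ b₂)) :
    -(υ₀ * α * a₁) = (lam - σf + σs) * a₁ - σs * a₂ ∧
    υ₀ * α * b₁ = (lam - σf + σs) * b₁ - σs * b₂ ∧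
    -(υ₀ * α * a₂) = σs * a₁ - (lam - σf + σs) * a₂ ∧
    υ₀ * α * b₂ = σs * b₁ - (lam - σf + σs) * b₂ := by
  set β := lam - σf + σs
  have hs : (Set.Ioo (-L) L).Nontrivial := (Set.Ioo_infinite (by linarith)).nontrivial
  obtain ⟨e₁, e₂⟩ := expComb_coeffs_of_hasDerivAt hs hα
    (c := (β * a₁ - σs * a₂) / υ₀) (d := (β * b₁ - σs * b₂) / υ₀) fun r hr => by
      convert (h r hr).1 using 1
      simp only [expComb]
      ring
  obtain ⟨e₃, e₄⟩ := expComb_coeffs_of_hasDerivAt hs hα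
    (c := (σs * a₁ - β * a₂) / υ₀) (d := (σs * b₁ - β * b₂) / υ₀) fun r hr => by
      convert (h r hr).2 using 1
      simp only [expComb]
      ring
  rw [div_eq_iff hυ₀] at e₁ e₂ e₃ e₄
  refine ⟨?_, ?_, ?_, ?_⟩ <;> linarith

theorem two_mul_sinh_mul_exp_neg (x : ℝ) : 2 * sinh x * exp (-x) = 1 - exp (-x) ^ 2 := by
  rw [sinh_eq, exp_neg]
  field_simp

theorem two_mul_cosh_mul_exp_neg (x : ℝ) : 2 * cosh x * exp (-x) = 1 + exp (-x) ^ 2 := by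
  rw [cosh_eq, exp_neg]
  field_simp

theorem SlabODE.sinh_cosh_relations {υ₀ σs σf L lam α C C' x : ℝ} (hυ₀ : υ₀ ≠ 0)
    (hα : α ≠ 0) (hL : 0 < L) (hC : C ≠ 0)
    (h : SlabODE υ₀ σs σf L lam (expComb α C (-(C * exp (-x))))
      (expComb α (-(C' * exp (-x))) C')) :
    υ₀ * α * C = σs * C' * sinh x ∧ υ₀ * α * C' = σs * C * sinh x ∧
    (lam - σf + σs) * sinh x = -(υ₀ * α * cosh x) := by
  obtain ⟨e₁, e₂, e₃, e₄⟩ := h.coeffs_of_expComb hυ₀ hα hL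
  have ht : exp (-x) ≠ 0 := (exp_pos _).ne'
  have hS := two_mul_sinh_mul_exp_neg x
  have hK := two_mul_cosh_mul_exp_neg x
  set t := exp (-x)
  refine ⟨mul_right_cancel₀ ht ?_, mul_right_cancel₀ ht ?_,
    mul_right_cancel₀ (mul_ne_zero hC ht) ?_⟩
  · linear_combination (-(t * e₁) - e₂ - σs * C' * hS) / 2
  · linear_combination (e₃ + t * e₄ - σs * C * hS) / 2
  · linear_combination (-(e₁ + t * e₂) + (lam - σf + σs) * C * hS + υ₀ * α * C * hK) / 2

theorem slab_exponential_constraints_general (υ₀ σs σf L lam α C C' : ℝ)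
    (hυ₀ : 0 < υ₀) (hL : 0 < L)
    (hα : 0 < α) (hC : C ≠ 0) (hC' : C' ≠ 0)
    (fp fm : ℝ → ℝ)
    (hfp : ∀ r, fp r = C * (Real.exp (-(α * r)) - Real.exp (α * r - 2 * α * L)))
    (hfm : ∀ r, fm r = C' * (Real.exp (α * r) - Real.exp (-(α * r) - 2 * α * L)))
    (hode : SlabODE υ₀ σs σf L lam fp fm) :
    (C / C') ^ 2 = 1 ∧
    (C' / C) * α / Real.sinh (2 * α * L) = σs / υ₀ ∧
    α * Real.cosh (2 * α * L) / Real.sinh (2 * α * L) = -(lam - σf + σs) / υ₀ := by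
  have hfp' : fp = expComb α C (-(C * exp (-(2 * α * L)))) := funext fun r => by
    rw [hfp, expComb, sub_eq_add_neg (α * r), exp_add]; ring
  have hfm' : fm = expComb α (-(C' * exp (-(2 * α * L)))) C' := funext fun r => by
    rw [hfm, expComb, sub_eq_add_neg (-(α * r)), exp_add]; ring
  subst hfp' hfm'
  obtain ⟨hC_sinh, hC'_sinh, hβ⟩ := hode.sinh_cosh_relations hυ₀.ne' hα.ne' hL hC
  have hsinh : sinh (2 * α * L) ≠ 0 := (sinh_pos_iff.2 (by positivity)).ne'
  set S := sinh (2 * α * L)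
  refine ⟨?_, ?_, ?_⟩
  · rw [div_pow, div_eq_one_iff_eq (pow_ne_zero 2 hC')]
    exact mul_left_cancel₀ (by positivity : υ₀ * α ≠ 0)
      (by linear_combination C * hC_sinh - C' * hC'_sinh)
  · field_simp
    linear_combination hC'_sinh
  · set K := cosh (2 * α * L)
    field_simp
    linear_combination hβ

/-- Constraints satisfied by the exponential solutions of the slab reactor ODE system. -/
theorem slab_exponential_constraints (υ₀ σs σf L lam α C C' : ℝ)
    (hυ₀ : 0 < υ₀) (hσs : 0 < σs) (hσf : 0 < σf) (hL : 0 < L)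
    (hα : 0 < α) (hC : C ≠ 0) (hC' : C' ≠ 0)
    (fp fm : ℝ → ℝ)
    (hfp : ∀ r, fp r = C * (Real.exp (-(α * r)) - Real.exp (α * r - 2 * α * L)))
    (hfm : ∀ r, fm r = C' * (Real.exp (α * r) - Real.exp (-(α * r) - 2 * α * L)))
    (hode : SlabODE υ₀ σs σf L lam fp fm) :
    (C / C') ^ 2 = 1 ∧
    (C' / C) * α / Real.sinh (2 * α * L) = σs / υ₀ ∧
    α * Real.cosh (2 * α * L) / Real.sinh (2 * α * L) = -(lam - σf + σs) / υ₀ :=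
  slab_exponential_constraints_general υ₀ σs σf L lam α C C' hυ₀ hL hα hC hC' fp fm hfp hfm hode
end

section
/- Let κ₀, κ₂, λ, ε > 0. Then: (a) the choice t = √(2κ₀)/ε and k = 2κ₂/ε² satisfies κ₂/k + κ₀/t² = ε², and for this choice e^{λt}·k = 2κ₂ε⁻²·exp(λ√(2κ₀)/ε); and (b) every pair t, k > 0 satisfying κ₂/k + κ₀/t² ≤ ε² has e^{λt}·k > κ₂ε⁻²·exp(λ√κ₀/ε). -/
/-!
Part (a) is substitution. For part (b), both error terms are positive, so each of them alone is
below `ε ^ 2`: this forces `k > κ₂ / ε ^ 2` and `t > √κ₀ / ε`, and the cost `exp (λ t) * k` is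
strictly increasing in both variables.
-/

open Real

lemma div_two_mul_div_self {a : ℝ} (ha : a ≠ 0) (c : ℝ) : a / (2 * a / c) = c / 2 := by
  rcases eq_or_ne c 0 with rfl | hc
  · simp
  · field_simp

lemma sqrt_div_lt_of_div_sq_lt {a t ε : ℝ} (ht : 0 < t) (hε : 0 < ε) (h : a / t ^ 2 < ε ^ 2) :
    √a / ε < t := by
  rw [div_lt_iff₀ hε, sqrt_lt' (by positivity), mul_pow]
  rwa [div_lt_iff₀ (by positivity), mul_comm] at h

lemma exp_mul_mul_lt_exp_mul_mul {lam t₀ t k₀ k : ℝ} (hlam : 0 < lam) (ht : t₀ < t)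
    (hk₀ : 0 ≤ k₀) (hk : k₀ < k) : exp (lam * t₀) * k₀ < exp (lam * t) * k :=
  mul_lt_mul'' (exp_lt_exp.2 (mul_lt_mul_of_pos_left ht hlam)) hk (exp_pos _).le hk₀

/-- Feasibility and cost lower bound in the supercritical-case complexity analysis of
the NBP Monte Carlo algorithm. -/
theorem supercritical_complexity (κ₀ κ₂ lam ε : ℝ)
    (h₀ : 0 < κ₀) (h₂ : 0 < κ₂) (hlam : 0 < lam) (hε : 0 < ε) :
    (∀ t k : ℝ, t = Real.sqrt (2 * κ₀) / ε → k = 2 * κ₂ / ε ^ 2 →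
        κ₂ / k + κ₀ / t ^ 2 = ε ^ 2 ∧
        Real.exp (lam * t) * k = 2 * κ₂ / ε ^ 2 * Real.exp (lam * Real.sqrt (2 * κ₀) / ε)) ∧
    (∀ t k : ℝ, 0 < t → 0 < k → κ₂ / k + κ₀ / t ^ 2 ≤ ε ^ 2 →
        κ₂ / ε ^ 2 * Real.exp (lam * Real.sqrt κ₀ / ε) < Real.exp (lam * t) * k) := by
  constructor
  · rintro t k rfl rfl
    have ht_sq : (√(2 * κ₀) / ε) ^ 2 = 2 * κ₀ / ε ^ 2 := by
      rw [div_pow, sq_sqrt (by positivity)]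
    refine ⟨?_, ?_⟩
    · rw [ht_sq, div_two_mul_div_self h₂.ne', div_two_mul_div_self h₀.ne']
      ring
    · rw [mul_comm, mul_div_assoc lam]
  · intro t k ht hk hmse
    have hk_lb : κ₂ / ε ^ 2 < k := by
      have : 0 < κ₀ / t ^ 2 := by positivity
      exact (div_lt_comm₀ hk (by positivity)).1 (by linarith)
    have ht_lb : √κ₀ / ε < t := by
      have : 0 < κ₂ / k := by positivity
      exact sqrt_div_lt_of_div_sq_lt ht hε (by linarith)
    rw [mul_comm, mul_div_assoc]
    exact exp_mul_mul_lt_exp_mul_mul hlam ht_lb (by positivity) hk_lb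
end

section
/- Let υ₀, σ_s, L > 0 with υ₀ < 2Lσ_s. On (−L, L) define h₊(r) := min(r + L + υ₀/σ_s, L − r) and h₋(r) := min(r + L, L − r + υ₀/σ_s). Then h₊ and h₋ are strictly positive on (−L, L); h₊ is differentiable at every r ∈ (−L, L) with r ≠ −υ₀/(2σ_s), and at each such r, υ₀·h₊'(r) + σ_s·(h₋(r) − h₊(r)) ≤ 0; likewise h₋ is differentiable at every r ∈ (−L, L) with r ≠ υ₀/(2σ_s), and at each such r, −υ₀·h₋'(r) + σ_s·(h₊(r) − h₋(r)) ≤ 0. In particular, the supremum over all points of differentiability of the ratios (υ₀·h₊'(r) + σ_s(h₋(r) − h₊(r)))/h₊(r) and (−υ₀·h₋'(r) + σ_s(h₊(r) − h₋(r)))/h₋(r) is at most 0, hence finite. -/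
/-!
Near any point other than its kink, each of `h₊`, `h₋` is the smaller of its two affine
pieces, hence affine with slope `±1`. Writing `q = υ₀ / σ_s`, so that `υ₀ = σ_s q`, the drift
`υ₀ h₊' + σ_s (h₋ - h₊)` equals `σ_s (h₋ + q h₊' - h₊)`, and `h₋ + q h₊' ≤ h₊` holds on either
side of the kink because `h₋` is bounded by the piece of `h₊` shifted by `∓q`; symmetrically
for `h₋`.
-/

theorem HasDerivAt.min_of_lt {f g : ℝ → ℝ} {f' x : ℝ} (hf : HasDerivAt f f' x)
    (hg : ContinuousAt g x) (hfg : f x < g x) :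
    HasDerivAt (fun y => min (f y) (g y)) f' x := by
  have hfg_near : ∀ᶠ y in nhds x, f y < g y :=
    hf.continuousAt.eventually_lt hg hfg
  exact hf.congr_of_eventuallyEq (hfg_near.mono fun y hy => min_eq_left hy.le)

theorem HasDerivAt.min_of_gt {f g : ℝ → ℝ} {g' x : ℝ} (hg : HasDerivAt g g' x)
    (hf : ContinuousAt f x) (hgf : g x < f x) :
    HasDerivAt (fun y => min (f y) (g y)) g' x := by
  simpa only [min_comm] using hg.min_of_lt hf hgf

section Urts

variable {L q r : ℝ}

theorem urtsPlus_exists_hasDerivAt_drift_le (hr : r ≠ -q / 2) :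
    ∃ d, HasDerivAt (fun x => min (x + L + q) (L - x)) d r ∧
      min (r + L) (L - r + q) + q * d ≤ min (r + L + q) (L - r) := by
  have hleft : HasDerivAt (fun x => x + L + q) 1 r := ((hasDerivAt_id r).add_const L).add_const q
  have hright : HasDerivAt (fun x => L - x) (-1) r := (hasDerivAt_id r).const_sub L
  rcases hr.lt_or_gt with hr | hr
  · have hlt : r + L + q < L - r := by linarith
    refine ⟨1, hleft.min_of_lt hright.continuousAt hlt, ?_⟩
    rw [min_eq_left hlt.le]
    linarith [min_le_left (r + L) (L - r + q)]
  · have hlt : L - r < r + L + q := by linarith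
    refine ⟨-1, hright.min_of_gt hleft.continuousAt hlt, ?_⟩
    rw [min_eq_right hlt.le]
    linarith [min_le_right (r + L) (L - r + q)]

theorem urtsMinus_exists_hasDerivAt_drift_le (hr : r ≠ q / 2) :
    ∃ d, HasDerivAt (fun x => min (x + L) (L - x + q)) d r ∧
      min (r + L + q) (L - r) ≤ min (r + L) (L - r + q) + q * d := by
  have hleft : HasDerivAt (fun x => x + L) 1 r := (hasDerivAt_id r).add_const L
  have hright : HasDerivAt (fun x => L - x + q) (-1) r :=
    ((hasDerivAt_id r).const_sub L).add_const q
  rcases hr.lt_or_gt with hr | hr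
  · have hlt : r + L < L - r + q := by linarith
    refine ⟨1, hleft.min_of_lt hright.continuousAt hlt, ?_⟩
    rw [min_eq_left hlt.le]
    linarith [min_le_left (r + L + q) (L - r)]
  · have hlt : L - r + q < r + L := by linarith
    refine ⟨-1, hright.min_of_gt hleft.continuousAt hlt, ?_⟩
    rw [min_eq_right hlt.le]
    linarith [min_le_right (r + L + q) (L - r)]

end Urts

theorem urts_one_dim_general (υ₀ σs L : ℝ) (hυ₀ : 0 < υ₀) (hσs : 0 < σs)
    (hp hm : ℝ → ℝ)
    (hhp : ∀ r, hp r = min (r + L + υ₀ / σs) (L - r))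
    (hhm : ∀ r, hm r = min (r + L) (L - r + υ₀ / σs)) :
    (∀ r ∈ Set.Ioo (-L) L, 0 < hp r ∧ 0 < hm r) ∧
    (∀ r ∈ Set.Ioo (-L) L, r ≠ -υ₀ / (2 * σs) →
        DifferentiableAt ℝ hp r ∧
        υ₀ * deriv hp r + σs * (hm r - hp r) ≤ 0 ∧
        (υ₀ * deriv hp r + σs * (hm r - hp r)) / hp r ≤ 0) ∧
    (∀ r ∈ Set.Ioo (-L) L, r ≠ υ₀ / (2 * σs) →
        DifferentiableAt ℝ hm r ∧
        -υ₀ * deriv hm r + σs * (hp r - hm r) ≤ 0 ∧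
        (-υ₀ * deriv hm r + σs * (hp r - hm r)) / hm r ≤ 0) := by
  obtain rfl : hp = fun r => min (r + L + υ₀ / σs) (L - r) := funext hhp
  obtain rfl : hm = fun r => min (r + L) (L - r + υ₀ / σs) := funext hhm
  set q := υ₀ / σs
  have hq : 0 < q := div_pos hυ₀ hσs
  have hυ₀_eq : υ₀ = σs * q := (mul_div_cancel₀ υ₀ hσs.ne').symm
  have hkink : υ₀ / (2 * σs) = q / 2 := by ring
  have hpos : ∀ r ∈ Set.Ioo (-L) L, 0 < min (r + L + q) (L - r) ∧ 0 < min (r + L) (L - r + q) :=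
    fun r ⟨h₁, h₂⟩ => ⟨lt_min (by linarith) (by linarith), lt_min (by linarith) (by linarith)⟩
  refine ⟨hpos, fun r hr hne => ?_, fun r hr hne => ?_⟩
  · obtain ⟨d, hd, hbound⟩ := urtsPlus_exists_hasDerivAt_drift_le (L := L)
      (by rwa [neg_div, hkink, ← neg_div] at hne)
    have hdrift : υ₀ * d + σs * (min (r + L) (L - r + q) - min (r + L + q) (L - r)) ≤ 0 := by
      rw [hυ₀_eq]; linear_combination σs * hbound
    rw [hd.deriv]
    exact ⟨hd.differentiableAt, hdrift, div_nonpos_of_nonpos_of_nonneg hdrift (hpos r hr).1.le⟩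
  · obtain ⟨d, hd, hbound⟩ := urtsMinus_exists_hasDerivAt_drift_le (L := L)
      (by rwa [hkink] at hne)
    have hdrift : -υ₀ * d + σs * (min (r + L + q) (L - r) - min (r + L) (L - r + q)) ≤ 0 := by
      rw [hυ₀_eq]; linear_combination σs * hbound
    rw [hd.deriv]
    exact ⟨hd.differentiableAt, hdrift, div_nonpos_of_nonpos_of_nonneg hdrift (hpos r hr).2.le⟩

/-- The one-dimensional Urts function `h₁` is positive, piecewise differentiable, and has
`(L h₁)/h₁ ≤ 0` at every point of differentiability, so that `sup (L h₁)/h₁ < ∞`. -/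
theorem urts_one_dim (υ₀ σs L : ℝ) (hυ₀ : 0 < υ₀) (hσs : 0 < σs) (hL : 0 < L)
    (hlt : υ₀ < 2 * L * σs)
    (hp hm : ℝ → ℝ)
    (hhp : ∀ r, hp r = min (r + L + υ₀ / σs) (L - r))
    (hhm : ∀ r, hm r = min (r + L) (L - r + υ₀ / σs)) :
    (∀ r ∈ Set.Ioo (-L) L, 0 < hp r ∧ 0 < hm r) ∧
    (∀ r ∈ Set.Ioo (-L) L, r ≠ -υ₀ / (2 * σs) →
        DifferentiableAt ℝ hp r ∧
        υ₀ * deriv hp r + σs * (hm r - hp r) ≤ 0 ∧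
        (υ₀ * deriv hp r + σs * (hm r - hp r)) / hp r ≤ 0) ∧
    (∀ r ∈ Set.Ioo (-L) L, r ≠ υ₀ / (2 * σs) →
        DifferentiableAt ℝ hm r ∧
        -υ₀ * deriv hm r + σs * (hp r - hm r) ≤ 0 ∧
        (-υ₀ * deriv hm r + σs * (hp r - hm r)) / hm r ≤ 0) :=
  urts_one_dim_general υ₀ σs L hυ₀ hσs hp hm hhp hhm
end

section
/- Let D ⊆ ℝ³ be a nonempty open bounded set and let V = {υ ∈ ℝ³ : υ_min ≤ ‖υ‖ ≤ υ_max} with 0 < υ_min < υ_max. Let σ_s, σ_f : D × V → [0, ∞) be bounded measurable, and let π_s, π_f : D × V × V → [0, ∞) be bounded measurable with ∫_V π_s(r, υ, υ') dυ' = 1 for all (r, υ). For a bounded measurable f : D × V → ℝ define (U_t f)(r, υ) := f(r + υt, υ)·1{r + υs ∈ D for all s ∈ [0, t]}; (S f)(r, υ) := σ_s(r, υ)·∫_V (f(r, υ') − f(r, υ)) π_s(r, υ, υ') dυ'; and (F f)(r, υ) := σ_f(r, υ)·∫_V f(r, υ') π_f(r, υ, υ') dυ' − σ_f(r, υ)·f(r,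 υ). Fix a bounded measurable g : D × V → [0, ∞). If ψ¹, ψ² : [0, ∞) × D × V → ℝ are jointly measurable, satisfy sup_{s ≤ t} ‖ψⁱ_s‖_∞ < ∞ for every t ≥ 0 and i = 1, 2, and both satisfy the mild equation ψ_t = U_t g + ∫₀ᵗ U_s[(S + F)ψ_{t−s}] ds pointwise on D × V for all t ≥ 0, then ψ¹_t = ψ²_t on D × V for all t ≥ 0. -/
open MeasureTheory

/-- Position/velocity space `ℝ³`. -/
abbrev E3 := EuclideanSpace ℝ (Fin 3)

open Classical in
/-- The advection semigroup with killing on exit from `D`: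
`(U_t f)(r,υ) = f(r + tυ, υ) 1{r + sυ ∈ D for all s ∈ [0,t]}`. -/
noncomputable def advectOp (D : Set E3) (f : E3 → E3 → ℝ) (t : ℝ) (r υ : E3) : ℝ :=
  if ∀ s ∈ Set.Icc (0 : ℝ) t, r + s • υ ∈ D then f (r + t • υ) υ else 0

/-- The scattering operator
`(S f)(r,υ) = σ_s(r,υ) ∫_V (f(r,υ') − f(r,υ)) π_s(r,υ,υ') dυ'`. -/
noncomputable def scatterOp (V : Set E3) (σs : E3 → E3 → ℝ)
    (πs : E3 → E3 → E3 → ℝ) (f : E3 → E3 → ℝ) (r υ : E3) : ℝ :=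
  σs r υ * ∫ υ' in V, (f r υ' - f r υ) * πs r υ υ'

/-- The fission operator
`(F f)(r,υ) = σ_f(r,υ) ∫_V f(r,υ') π_f(r,υ,υ') dυ' − σ_f(r,υ) f(r,υ)`. -/
noncomputable def fissionOp (V : Set E3) (σf : E3 → E3 → ℝ)
    (πf : E3 → E3 → E3 → ℝ) (f : E3 → E3 → ℝ) (r υ : E3) : ℝ :=
  σf r υ * (∫ υ' in V, f r υ' * πf r υ υ') - σf r υ * f r υ


/-!
Write `w = ψ¹ - ψ²`. Since `g` cancels, `w_u` is the Duhamel integral of `U_s[(S + F) w_{u-s}]`.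
The advection `U_s` never increases sup norms on `D × V`, and `S + F` is bounded on bounded
functions (`∫ π_s = 1`, `π_f` bounded, `V` of finite volume), so any continuous bound `ρ` on `|w|`
improves to `C ∫₀ᵘ ρ(u - s) ds`. Iterating from the local bound `M` gives
`|w_u| ≤ M (C u)ⁿ / n!` for every `n`, hence `w = 0`. Iterating bounds, rather than applying
Grönwall to `u ↦ sup |w_u|`, avoids any measurability question for that supremum.
-/

open Set

open scoped Nat in
theorem eq_zero_of_abs_le_volterra {α : Type*} {A : Set α} {w : ℝ → α → ℝ} {t M C : ℝ}
    (hM : ∀ s ∈ Icc 0 t, ∀ a ∈ A, |w s a| ≤ M)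
    (hstep : ∀ ρ : ℝ → ℝ, Continuous ρ → (∀ s ∈ Icc 0 t, ∀ a ∈ A, |w s a| ≤ ρ s) →
      ∀ u ∈ Icc 0 t, ∀ a ∈ A, |w u a| ≤ C * ∫ s in 0..u, ρ (u - s)) :
    ∀ u ∈ Icc 0 t, ∀ a ∈ A, w u a = 0 := by
  have hpow : ∀ n : ℕ, ∀ u ∈ Icc 0 t, ∀ a ∈ A, |w u a| ≤ M * C ^ n * u ^ n / n ! := by
    intro n
    induction n with
    | zero => simpa using hM
    | succ n ih =>
      intro u hu a ha
      calc |w u a| ≤ C * ∫ s in 0..u, M * C ^ n * (u - s) ^ n / n ! :=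
            hstep _ (by fun_prop) ih u hu a ha
        _ = M * C ^ (n + 1) * u ^ (n + 1) / (n + 1)! := by
            rw [intervalIntegral.integral_comp_sub_left fun s => M * C ^ n * s ^ n / n !,
              sub_self, sub_zero, intervalIntegral.integral_div,
              intervalIntegral.integral_const_mul, integral_pow, Nat.factorial_succ]
            push_cast
            field_simp
            ring
  intro u hu a ha
  have hlim : Filter.Tendsto (fun n : ℕ => M * C ^ n * u ^ n / n !) Filter.atTop (nhds 0) := by
    simpa [mul_pow, mul_div_assoc, mul_assoc] using
      (FloorSemiring.tendsto_pow_div_factorial_atTop (C * u)).const_mul M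
  exact abs_eq_zero.1 (le_antisymm (ge_of_tendsto' hlim fun n => hpow n u hu a ha) (abs_nonneg _))

theorem isCompact_normShell {E : Type*} [NormedAddCommGroup E] [ProperSpace E] (a b : ℝ) :
    IsCompact {x : E | a ≤ ‖x‖ ∧ ‖x‖ ≤ b} :=
  (isCompact_closedBall 0 b).of_isClosed_subset
    ((isClosed_le continuous_const continuous_norm).inter
      (isClosed_le continuous_norm continuous_const))
    fun _ hx => mem_closedBall_zero_iff.2 hx.2

theorem MeasureTheory.IntegrableOn.mul_of_abs_le {α : Type*} [MeasurableSpace α]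
    {μ : Measure α} {s : Set α} {h π : α → ℝ} {M : ℝ} (hs : MeasurableSet s)
    (hh : IntegrableOn h s μ) (hπm : Measurable π) (hπ : ∀ y ∈ s, |π y| ≤ M) :
    IntegrableOn (fun y => h y * π y) s μ :=
  Integrable.mul_bdd hh hπm.aestronglyMeasurable
    ((ae_restrict_iff' hs).2 (Filter.Eventually.of_forall hπ))

theorem MeasureTheory.integrableOn_of_abs_le {α : Type*} [MeasurableSpace α]
    {μ : Measure α} {s : Set α} {h : α → ℝ} {B : ℝ} (hs : MeasurableSet s) (hμs : μ s < ⊤)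
    (hh : Measurable h) (hB : ∀ y ∈ s, |h y| ≤ B) : IntegrableOn h s μ :=
  Measure.integrableOn_of_bounded hμs.ne hh.aestronglyMeasurable
    ((ae_restrict_iff' hs).2 (Filter.Eventually.of_forall hB))

section Collision

variable {V : Set E3} {σs σf : E3 → E3 → ℝ} {πs πf : E3 → E3 → E3 → ℝ}
  {f f₁ f₂ : E3 → E3 → ℝ} {x υ : E3}

theorem abs_scatterOp_le (hV : MeasurableSet V) {Ms B : ℝ} (hυ : υ ∈ V)
    (hσ : |σs x υ| ≤ Ms) (hπ : ∀ υ' ∈ V, 0 ≤ πs x υ υ') (hπ1 : ∫ υ' in V, πs x υ υ' = 1)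
    (hf : ∀ υ' ∈ V, |f x υ'| ≤ B) :
    |scatterOp V σs πs f x υ| ≤ Ms * (2 * B) := by
  have hπint : IntegrableOn (πs x υ) V :=
    Integrable.of_integral_ne_zero (by rw [hπ1]; exact one_ne_zero)
  have hI : |∫ υ' in V, (f x υ' - f x υ) * πs x υ υ'| ≤ 2 * B :=
    calc |∫ υ' in V, (f x υ' - f x υ) * πs x υ υ'|
        ≤ ∫ υ' in V, 2 * B * πs x υ υ' := by
          rw [← Real.norm_eq_abs]
          refine MeasureTheory.norm_integral_le_of_norm_le (hπint.const_mul _)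
            ((ae_restrict_iff' hV).2 (Filter.Eventually.of_forall fun υ' hυ' => ?_))
          rw [Real.norm_eq_abs, abs_mul, abs_of_nonneg (hπ υ' hυ')]
          gcongr
          · exact hπ υ' hυ'
          · linarith [abs_sub (f x υ') (f x υ), hf υ' hυ', hf υ hυ]
      _ = 2 * B := by rw [integral_const_mul, hπ1, mul_one]
  rw [scatterOp, abs_mul]
  exact mul_le_mul hσ hI (abs_nonneg _) ((abs_nonneg _).trans hσ)

theorem abs_fissionOp_le (hV : volume V < ⊤) {Mf Mπ B : ℝ} (hυ : υ ∈ V)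
    (hσ : |σf x υ| ≤ Mf) (hπ : ∀ υ' ∈ V, |πf x υ υ'| ≤ Mπ)
    (hf : ∀ υ' ∈ V, |f x υ'| ≤ B) :
    |fissionOp V σf πf f x υ| ≤ Mf * (Mπ * volume.real V + 1) * B := by
  have hB : 0 ≤ B := (abs_nonneg _).trans (hf υ hυ)
  have hI : |∫ υ' in V, f x υ' * πf x υ υ'| ≤ B * Mπ * volume.real V :=
    norm_setIntegral_le_of_norm_le_const (C := B * Mπ) hV fun υ' hυ' => by
      rw [Real.norm_eq_abs, abs_mul]
      exact mul_le_mul (hf υ' hυ') (hπ υ' hυ') (abs_nonneg _) hB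
  rw [fissionOp, ← mul_sub, abs_mul]
  calc |σf x υ| * |(∫ υ' in V, f x υ' * πf x υ υ') - f x υ|
      ≤ Mf * (B * Mπ * volume.real V + B) := by
        gcongr
        · exact (abs_nonneg _).trans hσ
        · exact (abs_sub _ _).trans (add_le_add hI (hf υ hυ))
    _ = Mf * (Mπ * volume.real V + 1) * B := by ring

theorem scatterOp_sub (hV : MeasurableSet V) (hVfin : volume V < ⊤) {M : ℝ}
    (hπm : Measurable (πs x υ)) (hπ : ∀ υ' ∈ V, |πs x υ υ'| ≤ M)
    (hf₁ : IntegrableOn (f₁ x) V) (hf₂ : IntegrableOn (f₂ x) V) :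
    scatterOp V σs πs f₁ x υ - scatterOp V σs πs f₂ x υ = scatterOp V σs πs (f₁ - f₂) x υ := by
  have hint : ∀ {h : E3 → ℝ}, IntegrableOn h V →
      IntegrableOn (fun υ' => (h υ' - h υ) * πs x υ υ') V := fun hh =>
    (hh.sub (integrableOn_const hVfin.ne)).mul_of_abs_le hV hπm hπ
  simp only [scatterOp, ← mul_sub, ← integral_sub (hint hf₁) (hint hf₂), Pi.sub_apply]
  congr 2 with υ'
  ring

theorem fissionOp_sub (hV : MeasurableSet V) {M : ℝ}
    (hπm : Measurable (πf x υ)) (hπ : ∀ υ' ∈ V, |πf x υ υ'| ≤ M)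
    (hf₁ : IntegrableOn (f₁ x) V) (hf₂ : IntegrableOn (f₂ x) V) :
    fissionOp V σf πf f₁ x υ - fissionOp V σf πf f₂ x υ = fissionOp V σf πf (f₁ - f₂) x υ := by
  simp only [fissionOp, Pi.sub_apply, sub_mul]
  rw [integral_sub (hf₁.mul_of_abs_le hV hπm hπ) (hf₂.mul_of_abs_le hV hπm hπ)]
  ring

end Collision

theorem advectOp_sub (D : Set E3) (f g : E3 → E3 → ℝ) (t : ℝ) (r υ : E3) :
    advectOp D f t r υ - advectOp D g t r υ = advectOp D (f - g) t r υ := by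
  unfold advectOp
  split_ifs <;> simp

theorem abs_advectOp_le {D : Set E3} {f : E3 → E3 → ℝ} {t B : ℝ} {r υ : E3} (ht : 0 ≤ t)
    (hB : 0 ≤ B) (hf : ∀ x ∈ D, |f x υ| ≤ B) : |advectOp D f t r υ| ≤ B := by
  unfold advectOp
  split_ifs with hpath
  · exact hf _ (hpath t ⟨ht, le_rfl⟩)
  · simpa using hB

theorem measurable_advectOp (D : Set E3) {h : ℝ → E3 → E3 → ℝ} {r υ : E3}
    (hh : Measurable fun s => h s (r + s • υ) υ) :
    Measurable fun s => advectOp D (h s) s r υ := by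
  have hpath : MeasurableSet {s : ℝ | ∀ s' ∈ Icc 0 s, r + s' • υ ∈ D} :=
    OrdConnected.measurableSet ⟨fun _ _ _ hy _ hz s' hs' => hy s' ⟨hs'.1, hs'.2.trans hz.2⟩⟩
  unfold advectOp
  exact Measurable.ite hpath hh measurable_const

noncomputable def collisionOp (V : Set E3) (σs σf : E3 → E3 → ℝ) (πs πf : E3 → E3 → E3 → ℝ)
    (f : E3 → E3 → ℝ) (r υ : E3) : ℝ :=
  scatterOp V σs πs f r υ + fissionOp V σf πf f r υ

def IsMildSolution (D V : Set E3) (σs σf : E3 → E3 → ℝ) (πs πf : E3 → E3 → E3 → ℝ)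
    (g : E3 → E3 → ℝ) (ψ : ℝ → E3 → E3 → ℝ) : Prop :=
  ∀ t : ℝ, 0 ≤ t → ∀ r ∈ D, ∀ υ ∈ V,
    ψ t r υ = advectOp D g t r υ +
      ∫ s in (0 : ℝ)..t, advectOp D (collisionOp V σs σf πs πf (ψ (t - s))) s r υ

structure AdmissibleCrossSections (V : Set E3) (σs σf : E3 → E3 → ℝ)
    (πs πf : E3 → E3 → E3 → ℝ) : Prop where
  measurableSet : MeasurableSet V
  volume_lt_top : volume V < ⊤
  measurable_σs : Measurable (Function.uncurry σs)
  measurable_σf : Measurable (Function.uncurry σf)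
  measurable_πs : Measurable fun p : E3 × E3 × E3 => πs p.1 p.2.1 p.2.2
  measurable_πf : Measurable fun p : E3 × E3 × E3 => πf p.1 p.2.1 p.2.2
  σs_nonneg : ∀ r υ, 0 ≤ σs r υ
  σf_nonneg : ∀ r υ, 0 ≤ σf r υ
  πs_nonneg : ∀ r υ υ', 0 ≤ πs r υ υ'
  πf_nonneg : ∀ r υ υ', 0 ≤ πf r υ υ'
  σs_bdd : ∃ M : ℝ, ∀ r υ, σs r υ ≤ M
  σf_bdd : ∃ M : ℝ, ∀ r υ, σf r υ ≤ M
  πs_bdd : ∃ M : ℝ, ∀ r υ υ', πs r υ υ' ≤ M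
  πf_bdd : ∃ M : ℝ, ∀ r υ υ', πf r υ υ' ≤ M
  integral_πs : ∀ r υ, ∫ υ' in V, πs r υ υ' = 1

namespace AdmissibleCrossSections

variable {V : Set E3} {σs σf : E3 → E3 → ℝ} {πs πf : E3 → E3 → E3 → ℝ}

theorem exists_abs_collisionOp_le (h : AdmissibleCrossSections V σs σf πs πf) :
    ∃ C, 0 ≤ C ∧ ∀ (f : E3 → E3 → ℝ) (x : E3), ∀ υ ∈ V, ∀ B : ℝ,
      (∀ υ' ∈ V, |f x υ'| ≤ B) → |collisionOp V σs σf πs πf f x υ| ≤ C * B := by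
  obtain ⟨Ms, hMs⟩ := h.σs_bdd
  obtain ⟨Mf, hMf⟩ := h.σf_bdd
  obtain ⟨Mπ, hMπ⟩ := h.πf_bdd
  have hMs0 : 0 ≤ Ms := (h.σs_nonneg 0 0).trans (hMs 0 0)
  have hMf0 : 0 ≤ Mf := (h.σf_nonneg 0 0).trans (hMf 0 0)
  have hMπ0 : 0 ≤ Mπ := (h.πf_nonneg 0 0 0).trans (hMπ 0 0 0)
  refine ⟨2 * Ms + Mf * (Mπ * volume.real V + 1),
    add_nonneg (by linarith) (mul_nonneg hMf0 (by positivity)), fun f x υ hυ B hf => ?_⟩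
  have hS := abs_scatterOp_le h.measurableSet hυ
    ((abs_of_nonneg (h.σs_nonneg x υ)).trans_le (hMs x υ)) (fun υ' _ => h.πs_nonneg x υ υ')
    (h.integral_πs x υ) hf
  have hF := abs_fissionOp_le h.volume_lt_top hυ
    ((abs_of_nonneg (h.σf_nonneg x υ)).trans_le (hMf x υ))
    (fun υ' _ => (abs_of_nonneg (h.πf_nonneg x υ υ')).trans_le (hMπ x υ υ')) hf
  calc |collisionOp V σs σf πs πf f x υ|
      ≤ |scatterOp V σs πs f x υ| + |fissionOp V σf πf f x υ| := abs_add_le _ _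
    _ ≤ Ms * (2 * B) + Mf * (Mπ * volume.real V + 1) * B := add_le_add hS hF
    _ = (2 * Ms + Mf * (Mπ * volume.real V + 1)) * B := by ring

theorem collisionOp_sub (h : AdmissibleCrossSections V σs σf πs πf) {f₁ f₂ : E3 → E3 → ℝ}
    {x υ : E3} (hf₁ : IntegrableOn (f₁ x) V) (hf₂ : IntegrableOn (f₂ x) V) :
    collisionOp V σs σf πs πf f₁ x υ - collisionOp V σs σf πs πf f₂ x υ =
      collisionOp V σs σf πs πf (f₁ - f₂) x υ := by
  obtain ⟨Mπs, hMπs⟩ := h.πs_bdd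
  obtain ⟨Mπf, hMπf⟩ := h.πf_bdd
  have hS := scatterOp_sub (σs := σs) h.measurableSet h.volume_lt_top
    (h.measurable_πs.comp (f := fun υ' => (x, υ, υ')) (by fun_prop))
    (fun υ' _ => (abs_of_nonneg (h.πs_nonneg x υ υ')).trans_le (hMπs x υ υ')) hf₁ hf₂
  have hF := fissionOp_sub (σf := σf) h.measurableSet
    (h.measurable_πf.comp (f := fun υ' => (x, υ, υ')) (by fun_prop))
    (fun υ' _ => (abs_of_nonneg (h.πf_nonneg x υ υ')).trans_le (hMπf x υ υ')) hf₁ hf₂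
  rw [collisionOp, collisionOp, collisionOp, ← hS, ← hF]
  ring

theorem measurable_collisionOp (h : AdmissibleCrossSections V σs σf πs πf) {ι : Type*}
    [MeasurableSpace ι] {ψ : ι → E3 → E3 → ℝ}
    (hψ : Measurable fun p : ι × E3 × E3 => ψ p.1 p.2.1 p.2.2) :
    Measurable fun p : ι × E3 × E3 => collisionOp V σs σf πs πf (ψ p.1) p.2.1 p.2.2 := by
  have hσs : Measurable fun p : ι × E3 × E3 => σs p.2.1 p.2.2 :=
    h.measurable_σs.comp measurable_snd
  have hσf : Measurable fun p : ι × E3 × E3 => σf p.2.1 p.2.2 :=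
    h.measurable_σf.comp measurable_snd
  have hψ' : Measurable fun q : (ι × E3 × E3) × E3 => ψ q.1.1 q.1.2.1 q.2 :=
    hψ.comp (f := fun q : (ι × E3 × E3) × E3 => (q.1.1, q.1.2.1, q.2)) (by fun_prop)
  have hπs : Measurable fun q : (ι × E3 × E3) × E3 => πs q.1.2.1 q.1.2.2 q.2 :=
    h.measurable_πs.comp (f := fun q : (ι × E3 × E3) × E3 => (q.1.2.1, q.1.2.2, q.2))
      (by fun_prop)
  have hπf : Measurable fun q : (ι × E3 × E3) × E3 => πf q.1.2.1 q.1.2.2 q.2 :=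
    h.measurable_πf.comp (f := fun q : (ι × E3 × E3) × E3 => (q.1.2.1, q.1.2.2, q.2))
      (by fun_prop)
  have hIs := ((hψ'.sub (hψ.comp measurable_fst)).mul hπs).stronglyMeasurable.integral_prod_right'
    (ν := volume.restrict V)
  have hIf := (hψ'.mul hπf).stronglyMeasurable.integral_prod_right' (ν := volume.restrict V)
  exact (hσs.mul hIs.measurable).add ((hσf.mul hIf.measurable).sub (hσf.mul hψ))

theorem intervalIntegrable_duhamel (h : AdmissibleCrossSections V σs σf πs πf) {D : Set E3}
    {ψ : ℝ → E3 → E3 → ℝ} (hψ : Measurable fun p : ℝ × E3 × E3 => ψ p.1 p.2.1 p.2.2)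
    {t B : ℝ} (hB : ∀ s ∈ Icc 0 t, ∀ r ∈ D, ∀ υ ∈ V, |ψ s r υ| ≤ B)
    {u : ℝ} (hu : u ∈ Icc 0 t) {r υ : E3} (hr : r ∈ D) (hυ : υ ∈ V) :
    IntervalIntegrable (fun s => advectOp D (collisionOp V σs σf πs πf (ψ (u - s))) s r υ)
      volume 0 u := by
  obtain ⟨C, hC0, hC⟩ := h.exists_abs_collisionOp_le
  have hmeas : Measurable fun s => advectOp D (collisionOp V σs σf πs πf (ψ (u - s))) s r υ :=
    measurable_advectOp D ((h.measurable_collisionOp hψ).comp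
      (f := fun s => (u - s, r + s • υ, υ)) (by fun_prop))
  rw [intervalIntegrable_iff_integrableOn_Ioc_of_le hu.1]
  refine Measure.integrableOn_of_bounded (M := C * B) measure_Ioc_lt_top.ne
    hmeas.aestronglyMeasurable
    ((ae_restrict_iff' measurableSet_Ioc).2 (Filter.Eventually.of_forall fun s hs => ?_))
  have hus : u - s ∈ Icc 0 t := ⟨by linarith [hs.2], by linarith [hs.1, hu.2]⟩
  exact abs_advectOp_le hs.1.le (mul_nonneg hC0 ((abs_nonneg _).trans (hB u hu r hr υ hυ)))
    fun x hx => hC _ x υ hυ B fun υ' hυ' => hB _ hus x hx υ' hυ'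

theorem exists_volterra_bound (h : AdmissibleCrossSections V σs σf πs πf) {D : Set E3}
    {g : E3 → E3 → ℝ} {ψ₁ ψ₂ : ℝ → E3 → E3 → ℝ}
    (hψ₁ : IsMildSolution D V σs σf πs πf g ψ₁) (hψ₂ : IsMildSolution D V σs σf πs πf g ψ₂)
    (hm₁ : Measurable fun p : ℝ × E3 × E3 => ψ₁ p.1 p.2.1 p.2.2)
    (hm₂ : Measurable fun p : ℝ × E3 × E3 => ψ₂ p.1 p.2.1 p.2.2) {t B₁ B₂ : ℝ}
    (hB₁ : ∀ s ∈ Icc 0 t, ∀ r ∈ D, ∀ υ ∈ V, |ψ₁ s r υ| ≤ B₁)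
    (hB₂ : ∀ s ∈ Icc 0 t, ∀ r ∈ D, ∀ υ ∈ V, |ψ₂ s r υ| ≤ B₂) :
    ∃ C, ∀ ρ : ℝ → ℝ, Continuous ρ →
      (∀ s ∈ Icc 0 t, ∀ p ∈ D ×ˢ V, |ψ₁ s p.1 p.2 - ψ₂ s p.1 p.2| ≤ ρ s) →
      ∀ u ∈ Icc 0 t, ∀ p ∈ D ×ˢ V,
        |ψ₁ u p.1 p.2 - ψ₂ u p.1 p.2| ≤ C * ∫ s in 0..u, ρ (u - s) := by
  obtain ⟨C, hC0, hC⟩ := h.exists_abs_collisionOp_le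
  refine ⟨C, fun ρ hρ hw u hu ⟨r, υ⟩ ⟨hr, hυ⟩ => ?_⟩
  have hslice : ∀ {ψ : ℝ → E3 → E3 → ℝ} {B : ℝ},
      (Measurable fun p : ℝ × E3 × E3 => ψ p.1 p.2.1 p.2.2) →
      (∀ s ∈ Icc 0 t, ∀ r ∈ D, ∀ υ ∈ V, |ψ s r υ| ≤ B) →
      ∀ s ∈ Icc 0 t, ∀ x ∈ D, IntegrableOn (ψ s x) V := fun hm hB s hs x hx =>
    integrableOn_of_abs_le h.measurableSet h.volume_lt_top
      (hm.comp (f := fun υ' => (s, x, υ')) (by fun_prop)) (hB s hs x hx)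
  have hintegrand : ∀ s ∈ Ioc 0 u,
      ‖advectOp D (collisionOp V σs σf πs πf (ψ₁ (u - s))) s r υ -
        advectOp D (collisionOp V σs σf πs πf (ψ₂ (u - s))) s r υ‖ ≤ C * ρ (u - s) := by
    intro s hs
    have hus : u - s ∈ Icc 0 t := ⟨by linarith [hs.2], by linarith [hs.1, hu.2]⟩
    rw [Real.norm_eq_abs, advectOp_sub]
    refine abs_advectOp_le hs.1.le (mul_nonneg hC0 ((abs_nonneg _).trans (hw _ hus _ ⟨hr, hυ⟩)))
      fun x hx => ?_
    rw [Pi.sub_apply, Pi.sub_apply,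
      h.collisionOp_sub (hslice hm₁ hB₁ _ hus x hx) (hslice hm₂ hB₂ _ hus x hx)]
    exact hC _ x υ hυ _ fun υ' hυ' => hw _ hus (x, υ') ⟨hx, hυ'⟩
  calc |ψ₁ u r υ - ψ₂ u r υ|
      = ‖∫ s in 0..u, (advectOp D (collisionOp V σs σf πs πf (ψ₁ (u - s))) s r υ -
          advectOp D (collisionOp V σs σf πs πf (ψ₂ (u - s))) s r υ)‖ := by
        rw [intervalIntegral.integral_sub (h.intervalIntegrable_duhamel hm₁ hB₁ hu hr hυ)
          (h.intervalIntegrable_duhamel hm₂ hB₂ hu hr hυ), hψ₁ u hu.1 r hr υ hυ,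
          hψ₂ u hu.1 r hr υ hυ, add_sub_add_left_eq_sub, Real.norm_eq_abs]
    _ ≤ ∫ s in 0..u, C * ρ (u - s) :=
        intervalIntegral.norm_integral_le_of_norm_le hu.1 (Filter.Eventually.of_forall hintegrand)
          ((by fun_prop : Continuous fun s => C * ρ (u - s)).intervalIntegrable 0 u)
    _ = C * ∫ s in 0..u, ρ (u - s) := intervalIntegral.integral_const_mul _ _

end AdmissibleCrossSections

theorem mild_NTE_uniqueness_general
    (D : Set E3)
    (υmin υmax : ℝ)
    (V : Set E3) (hV : V = {υ : E3 | υmin ≤ ‖υ‖ ∧ ‖υ‖ ≤ υmax})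
    (σs σf : E3 → E3 → ℝ)
    (hσs_meas : Measurable (Function.uncurry σs))
    (hσf_meas : Measurable (Function.uncurry σf))
    (hσs_nonneg : ∀ r υ, 0 ≤ σs r υ) (hσf_nonneg : ∀ r υ, 0 ≤ σf r υ)
    (hσs_bdd : ∃ M : ℝ, ∀ r υ, σs r υ ≤ M) (hσf_bdd : ∃ M : ℝ, ∀ r υ, σf r υ ≤ M)
    (πs πf : E3 → E3 → E3 → ℝ)
    (hπs_meas : Measurable fun p : E3 × E3 × E3 => πs p.1 p.2.1 p.2.2)
    (hπf_meas : Measurable fun p : E3 × E3 × E3 => πf p.1 p.2.1 p.2.2)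
    (hπs_nonneg : ∀ r υ υ', 0 ≤ πs r υ υ') (hπf_nonneg : ∀ r υ υ', 0 ≤ πf r υ υ')
    (hπs_bdd : ∃ M : ℝ, ∀ r υ υ', πs r υ υ' ≤ M)
    (hπf_bdd : ∃ M : ℝ, ∀ r υ υ', πf r υ υ' ≤ M)
    (hπs_prob : ∀ r υ, (∫ υ' in V, πs r υ υ') = 1)
    (g : E3 → E3 → ℝ)
    (ψ₁ ψ₂ : ℝ → E3 → E3 → ℝ)
    (hmeas₁ : Measurable fun p : ℝ × E3 × E3 => ψ₁ p.1 p.2.1 p.2.2)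
    (hmeas₂ : Measurable fun p : ℝ × E3 × E3 => ψ₂ p.1 p.2.1 p.2.2)
    (hbdd₁ : ∀ t : ℝ, 0 ≤ t → ∃ M : ℝ, ∀ s ∈ Set.Icc 0 t, ∀ r ∈ D, ∀ υ ∈ V, |ψ₁ s r υ| ≤ M)
    (hbdd₂ : ∀ t : ℝ, 0 ≤ t → ∃ M : ℝ, ∀ s ∈ Set.Icc 0 t, ∀ r ∈ D, ∀ υ ∈ V, |ψ₂ s r υ| ≤ M)
    (hmild₁ : ∀ t : ℝ, 0 ≤ t → ∀ r ∈ D, ∀ υ ∈ V,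
        ψ₁ t r υ = advectOp D g t r υ +
          ∫ s in (0 : ℝ)..t, advectOp D
            (fun r' υ' => scatterOp V σs πs (ψ₁ (t - s)) r' υ' +
              fissionOp V σf πf (ψ₁ (t - s)) r' υ') s r υ)
    (hmild₂ : ∀ t : ℝ, 0 ≤ t → ∀ r ∈ D, ∀ υ ∈ V,
        ψ₂ t r υ = advectOp D g t r υ +
          ∫ s in (0 : ℝ)..t, advectOp D
            (fun r' υ' => scatterOp V σs πs (ψ₂ (t - s)) r' υ' +
              fissionOp V σf πf (ψ₂ (t - s)) r' υ') s r υ) :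
    ∀ t : ℝ, 0 ≤ t → ∀ r ∈ D, ∀ υ ∈ V, ψ₁ t r υ = ψ₂ t r υ := by
  have hVc : IsCompact V := hV ▸ isCompact_normShell υmin υmax
  have h : AdmissibleCrossSections V σs σf πs πf :=
    ⟨hVc.measurableSet, hVc.measure_lt_top, hσs_meas, hσf_meas, hπs_meas, hπf_meas,
      hσs_nonneg, hσf_nonneg, hπs_nonneg, hπf_nonneg, hσs_bdd, hσf_bdd, hπs_bdd, hπf_bdd,
      hπs_prob⟩
  intro t ht r hr υ hυ
  obtain ⟨B₁, hB₁⟩ := hbdd₁ t ht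
  obtain ⟨B₂, hB₂⟩ := hbdd₂ t ht
  obtain ⟨C, hC⟩ := h.exists_volterra_bound hmild₁ hmild₂ hmeas₁ hmeas₂ hB₁ hB₂
  have hw := eq_zero_of_abs_le_volterra (w := fun s p => ψ₁ s p.1 p.2 - ψ₂ s p.1 p.2)
    (A := D ×ˢ V) (M := B₁ + B₂)
    (fun s hs p hp => (abs_sub _ _).trans (add_le_add (hB₁ s hs _ hp.1 _ hp.2)
      (hB₂ s hs _ hp.1 _ hp.2))) hC t ⟨ht, le_rfl⟩ (r, υ) ⟨hr, hυ⟩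
  exact sub_eq_zero.1 hw

/-- Uniqueness of time-locally-bounded solutions of the mild (Duhamel) form of the
backwards neutron transport equation. -/
theorem mild_NTE_uniqueness
    (D : Set E3) (hDne : D.Nonempty) (hDopen : IsOpen D)
    (hDbdd : Bornology.IsBounded D)
    (υmin υmax : ℝ) (h0 : 0 < υmin) (hmm : υmin < υmax)
    (V : Set E3) (hV : V = {υ : E3 | υmin ≤ ‖υ‖ ∧ ‖υ‖ ≤ υmax})
    (σs σf : E3 → E3 → ℝ)
    (hσs_meas : Measurable (Function.uncurry σs))
    (hσf_meas : Measurable (Function.uncurry σf))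
    (hσs_nonneg : ∀ r υ, 0 ≤ σs r υ) (hσf_nonneg : ∀ r υ, 0 ≤ σf r υ)
    (hσs_bdd : ∃ M : ℝ, ∀ r υ, σs r υ ≤ M) (hσf_bdd : ∃ M : ℝ, ∀ r υ, σf r υ ≤ M)
    (πs πf : E3 → E3 → E3 → ℝ)
    (hπs_meas : Measurable fun p : E3 × E3 × E3 => πs p.1 p.2.1 p.2.2)
    (hπf_meas : Measurable fun p : E3 × E3 × E3 => πf p.1 p.2.1 p.2.2)
    (hπs_nonneg : ∀ r υ υ', 0 ≤ πs r υ υ') (hπf_nonneg : ∀ r υ υ', 0 ≤ πf r υ υ')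
    (hπs_bdd : ∃ M : ℝ, ∀ r υ υ', πs r υ υ' ≤ M)
    (hπf_bdd : ∃ M : ℝ, ∀ r υ υ', πf r υ υ' ≤ M)
    (hπs_prob : ∀ r υ, (∫ υ' in V, πs r υ υ') = 1)
    (g : E3 → E3 → ℝ) (hg_meas : Measurable (Function.uncurry g))
    (hg_nonneg : ∀ r υ, 0 ≤ g r υ) (hg_bdd : ∃ M : ℝ, ∀ r υ, g r υ ≤ M)
    (ψ₁ ψ₂ : ℝ → E3 → E3 → ℝ)
    (hmeas₁ : Measurable fun p : ℝ × E3 × E3 => ψ₁ p.1 p.2.1 p.2.2)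
    (hmeas₂ : Measurable fun p : ℝ × E3 × E3 => ψ₂ p.1 p.2.1 p.2.2)
    (hbdd₁ : ∀ t : ℝ, 0 ≤ t → ∃ M : ℝ, ∀ s ∈ Set.Icc 0 t, ∀ r ∈ D, ∀ υ ∈ V, |ψ₁ s r υ| ≤ M)
    (hbdd₂ : ∀ t : ℝ, 0 ≤ t → ∃ M : ℝ, ∀ s ∈ Set.Icc 0 t, ∀ r ∈ D, ∀ υ ∈ V, |ψ₂ s r υ| ≤ M)
    (hmild₁ : ∀ t : ℝ, 0 ≤ t → ∀ r ∈ D, ∀ υ ∈ V,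
        ψ₁ t r υ = advectOp D g t r υ +
          ∫ s in (0 : ℝ)..t, advectOp D
            (fun r' υ' => scatterOp V σs πs (ψ₁ (t - s)) r' υ' +
              fissionOp V σf πf (ψ₁ (t - s)) r' υ') s r υ)
    (hmild₂ : ∀ t : ℝ, 0 ≤ t → ∀ r ∈ D, ∀ υ ∈ V,
        ψ₂ t r υ = advectOp D g t r υ +
          ∫ s in (0 : ℝ)..t, advectOp D
            (fun r' υ' => scatterOp V σs πs (ψ₂ (t - s)) r' υ' +
              fissionOp V σf πf (ψ₂ (t - s)) r' υ') s r υ) :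
    ∀ t : ℝ, 0 ≤ t → ∀ r ∈ D, ∀ υ ∈ V, ψ₁ t r υ = ψ₂ t r υ :=
  mild_NTE_uniqueness_general D υmin υmax V hV σs σf hσs_meas hσf_meas hσs_nonneg hσf_nonneg hσs_bdd
    hσf_bdd πs πf hπs_meas hπf_meas hπs_nonneg hπf_nonneg hπs_bdd hπf_bdd hπs_prob g ψ₁ ψ₂ hmeas₁
    hmeas₂ hbdd₁ hbdd₂ hmild₁ hmild₂
end

section
/- Let D ⊆ ℝ³ be a nonempty open bounded convex set and let V = {υ ∈ ℝ³ : υ_min ≤ ‖υ‖ ≤ υ_max} with 0 < υ_min < υ_max. For r ∈ D and υ ∈ V define κ^D_{r,υ} := inf{t > 0 : r + tυ ∉ D}. Then inf_{r ∈ D} ∫_V ‖υ‖·κ^D_{r,υ} dυ > 0, where the integral is with respect to Lebesgue measure on V. -/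
/-!
If `D` is open, bounded and convex and `r ∈ D`, the exit time `κ_{r,υ}` is the reciprocal of the
gauge of `D - r` at `υ`; hence `υ ↦ ‖υ‖ κ_{r,υ}` is continuous away from `0` and integrable on the
compact annulus `V`. For the uniform lower bound, fix a ball `B(c, ρ) ⊆ D ⊆ B̄(c, R)`. From any
`r ∈ D`, all velocities in some ball `B(a, ε) ⊆ V` (with `ε` independent of `r`) point into
`B(c, ρ)` closely enough that, by convexity, the ray stays in `D` for a time bounded below
independently of `r`. The integrand is thus bounded below on a ball of fixed volume.
-/

open MeasureTheory

/-- The exit time of the ray from `r` with velocity `υ` out of `D`. -/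
noncomputable def exitTime (D : Set (EuclideanSpace ℝ (Fin 3)))
    (r υ : EuclideanSpace ℝ (Fin 3)) : ℝ :=
  sInf {t : ℝ | 0 < t ∧ r + t • υ ∉ D}

open Metric Set Bornology

theorem IsOpen.preimage_add_mem_nhds_zero {M : Type*} [TopologicalSpace M] [AddZeroClass M]
    [ContinuousAdd M] {D : Set M} {r : M} (hopen : IsOpen D) (hr : r ∈ D) :
    (r + ·) ⁻¹' D ∈ nhds (0 : M) :=
  (hopen.preimage (continuous_const_add r)).mem_nhds (by simpa using hr)

section Gauge

variable {E : Type*} [NormedAddCommGroup E] [NormedSpace ℝ E] {D : Set E} {r : E}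

theorem gauge_preimage_add_lt_one_iff (hopen : IsOpen D) (hconv : Convex ℝ D) (hr : r ∈ D)
    (x : E) : gauge ((r + ·) ⁻¹' D) x < 1 ↔ r + x ∈ D :=
  Set.ext_iff.1 (setOfPred_gauge_lt_one_eq_self_of_isOpen (hconv.translate_preimage_right r)
    (mem_of_mem_nhds (hopen.preimage_add_mem_nhds_zero hr))
    (hopen.preimage (continuous_const_add r))) x

theorem gauge_preimage_add_pos (hopen : IsOpen D) (hbdd : IsBounded D) (hr : r ∈ D) {x : E}
    (hx : x ≠ 0) : 0 < gauge ((r + ·) ⁻¹' D) x :=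
  (gauge_pos (absorbent_nhds_zero (hopen.preimage_add_mem_nhds_zero hr))
    ((NormedSpace.isVonNBounded_iff ℝ).2
      ((isometry_add_left r).antilipschitz.isBounded_preimage hbdd))).2 hx

end Gauge

theorem mul_measureReal_le_setIntegral {α : Type*} [MeasurableSpace α] {μ : Measure α}
    {f : α → ℝ} {s t : Set α} {C : ℝ} (hst : s ⊆ t) (hs : MeasurableSet s) (hμs : μ s ≠ ⊤)
    (hf : IntegrableOn f t μ) (hf0 : 0 ≤ f) (hC : ∀ x ∈ s, C ≤ f x) :
    C * μ.real s ≤ ∫ x in t, f x ∂μ :=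
  (setIntegral_ge_of_const_le_real hs hμs hC (hf.mono_set hst)).trans
    (setIntegral_mono_set hf (ae_of_all _ hf0) hst.eventuallyLE)

section Annulus

variable {E : Type*} [NormedAddCommGroup E]

theorem ball_subset_annulus {a : E} {υmin υmax ε : ℝ} (ha : ‖a‖ = (υmin + υmax) / 2)
    (hε : ε ≤ (υmax - υmin) / 2) : ball a ε ⊆ {υ | υmin ≤ ‖υ‖ ∧ ‖υ‖ ≤ υmax} := by
  intro υ hυ
  rw [mem_ball, dist_eq_norm] at hυ
  have := abs_norm_sub_norm_le υ a
  constructor <;> linarith [abs_le.1 this]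

theorem isCompact_annulus [ProperSpace E] (υmin υmax : ℝ) :
    IsCompact {υ : E | υmin ≤ ‖υ‖ ∧ ‖υ‖ ≤ υmax} :=
  (isCompact_closedBall 0 υmax).of_isClosed_subset
    ((isClosed_le continuous_const continuous_norm).inter
      (isClosed_le continuous_norm continuous_const))
    fun _ hυ => mem_closedBall_zero_iff.2 hυ.2

end Annulus

section ExitTime

local notation "E³" => EuclideanSpace ℝ (Fin 3)

variable {D : Set E³} {r υ : E³}

theorem exitTime_nonneg : 0 ≤ exitTime D r υ :=
  Real.sInf_nonneg fun _ ht => ht.1.le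

theorem exitTime_eq_inv_gauge (hopen : IsOpen D) (hconv : Convex ℝ D) (hbdd : IsBounded D)
    (hr : r ∈ D) (hυ : υ ≠ 0) : exitTime D r υ = (gauge ((r + ·) ⁻¹' D) υ)⁻¹ := by
  have hg := gauge_preimage_add_pos hopen hbdd hr hυ
  suffices {t : ℝ | 0 < t ∧ r + t • υ ∉ D} = Ici (gauge ((r + ·) ⁻¹' D) υ)⁻¹ by
    rw [exitTime, this, csInf_Ici]
  ext t
  simp only [mem_ofPred_eq, mem_Ici, ← gauge_preimage_add_lt_one_iff hopen hconv hr, not_lt]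
  constructor
  · rintro ⟨ht, h⟩
    rwa [gauge_smul_of_nonneg ht.le, smul_eq_mul, ← inv_le_iff_one_le_mul₀ hg] at h
  · intro ht
    have ht0 : 0 < t := (inv_pos.2 hg).trans_le ht
    exact ⟨ht0, by rwa [gauge_smul_of_nonneg ht0.le, smul_eq_mul, ← inv_le_iff_one_le_mul₀ hg]⟩

theorem le_exitTime_of_add_smul_mem (hopen : IsOpen D) (hconv : Convex ℝ D)
    (hbdd : IsBounded D) (hr : r ∈ D) (hυ : υ ≠ 0) {t : ℝ} (ht : 0 < t) (h : r + t • υ ∈ D) :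
    t ≤ exitTime D r υ := by
  have hg := gauge_preimage_add_pos hopen hbdd hr hυ
  have hlt := (gauge_preimage_add_lt_one_iff hopen hconv hr _).2 h
  rw [gauge_smul_of_nonneg ht.le, smul_eq_mul] at hlt
  rw [exitTime_eq_inv_gauge hopen hconv hbdd hr hυ, ← one_div, le_div_iff₀ hg]
  exact hlt.le

theorem mul_le_norm_mul_exitTime (hopen : IsOpen D) (hconv : Convex ℝ D) (hbdd : IsBounded D)
    (hr : r ∈ D) {vmin t : ℝ} (h0 : 0 < vmin) (hυ : vmin ≤ ‖υ‖) (ht : 0 < t)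
    (h : r + t • υ ∈ D) : vmin * t ≤ ‖υ‖ * exitTime D r υ :=
  mul_le_mul hυ (le_exitTime_of_add_smul_mem hopen hconv hbdd hr
    (norm_pos_iff.1 (h0.trans_le hυ)) ht h) ht.le (norm_nonneg υ)

theorem integrableOn_norm_mul_exitTime (hopen : IsOpen D) (hconv : Convex ℝ D)
    (hbdd : IsBounded D) (hr : r ∈ D) {V : Set E³} (hV : IsCompact V) (hV0 : (0 : E³) ∉ V) :
    IntegrableOn (fun υ => ‖υ‖ * exitTime D r υ) V := by
  have hne : ∀ υ ∈ V, υ ≠ 0 := fun υ hυ h => hV0 (h ▸ hυ)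
  have hcont : ContinuousOn (fun υ => ‖υ‖ * (gauge ((r + ·) ⁻¹' D) υ)⁻¹) V :=
    continuous_norm.continuousOn.mul <|
      (continuous_gauge (hconv.translate_preimage_right r)
        (hopen.preimage_add_mem_nhds_zero hr)).continuousOn.inv₀
      fun υ hυ => (gauge_preimage_add_pos hopen hbdd hr (hne υ hυ)).ne'
  refine (hcont.integrableOn_compact hV).congr_fun (fun υ hυ => ?_) hV.measurableSet
  rw [exitTime_eq_inv_gauge hopen hconv hbdd hr (hne υ hυ)]

theorem mul_measureReal_le_integral_norm_mul_exitTime (hopen : IsOpen D) (hconv : Convex ℝ D)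
    (hbdd : IsBounded D) (hr : r ∈ D) {υmin υmax ε t : ℝ} {a : E³} (h0 : 0 < υmin)
    (haV : ball a ε ⊆ {υ | υmin ≤ ‖υ‖ ∧ ‖υ‖ ≤ υmax}) (ht : 0 < t)
    (hat : ∀ υ ∈ ball a ε, r + t • υ ∈ D) :
    υmin * t * volume.real (ball a ε) ≤
      ∫ υ in {υ | υmin ≤ ‖υ‖ ∧ ‖υ‖ ≤ υmax}, ‖υ‖ * exitTime D r υ :=
  mul_measureReal_le_setIntegral haV measurableSet_ball measure_ball_lt_top.ne
    (integrableOn_norm_mul_exitTime hopen hconv hbdd hr (isCompact_annulus υmin υmax)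
      (by simp [h0.not_ge]))
    (fun υ => mul_nonneg (norm_nonneg υ) exitTime_nonneg)
    fun υ hυ => mul_le_norm_mul_exitTime hopen hconv hbdd hr h0 (haV hυ).1 ht (hat υ hυ)

end ExitTime

theorem exists_add_smul_ball_subset_ball {E : Type*} [NormedAddCommGroup E] [NormedSpace ℝ E]
    [Nontrivial E] {c r : E} {ρ R m ε : ℝ} (hρ : 0 < ρ) (hm : 0 < m) (hr : dist r c ≤ R)
    (hεm : ε ≤ m) (hεR : R * ε ≤ ρ * m) :
    ∃ a : E, ‖a‖ = m ∧ ∃ t, ρ / (4 * m) ≤ t ∧ ∀ υ ∈ ball a ε, r + t • υ ∈ ball c ρ := by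
  rw [dist_eq_norm'] at hr
  rcases lt_or_ge ‖c - r‖ (ρ / 2) with hnear | hfar
  · obtain ⟨a, ha⟩ := exists_norm_eq E hm.le
    refine ⟨a, ha, ρ / (4 * m), le_rfl, fun υ hυ => ?_⟩
    have hυm : ‖υ‖ < 2 * m := by
      have := norm_le_norm_add_norm_sub' υ a
      rw [mem_ball, dist_eq_norm] at hυ
      linarith
    rw [mem_ball, dist_eq_norm, show r + (ρ / (4 * m)) • υ - c = (ρ / (4 * m)) • υ - (c - r) by
      abel]
    calc ‖(ρ / (4 * m)) • υ - (c - r)‖ ≤ ρ / (4 * m) * ‖υ‖ + ‖c - r‖ := by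
          grw [norm_sub_le, norm_smul, Real.norm_of_nonneg (by positivity)]
      _ < ρ / (4 * m) * (2 * m) + ρ / 2 := by gcongr
      _ = ρ := by field_simp; ring
  · -- `a` points from `r` towards `c`, and `r + t • a = c`.
    set s := ‖c - r‖
    have hs : 0 < s := by linarith
    refine ⟨(m / s) • (c - r), ?_, s / m, ?_, fun υ hυ => ?_⟩
    · rw [norm_smul, Real.norm_of_nonneg (by positivity), div_mul_cancel₀ m hs.ne']
    · rw [div_le_div_iff₀ (by positivity) hm]
      nlinarith
    · rw [mem_ball, dist_eq_norm] at hυ ⊢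
      have hε : 0 ≤ ε := (norm_nonneg _).trans hυ.le
      rw [show r + (s / m) • υ - c = (s / m) • (υ - (m / s) • (c - r)) by
        rw [smul_sub, smul_smul, div_mul_div_comm, mul_comm s m, div_self (by positivity),
          one_smul]
        abel, norm_smul, Real.norm_of_nonneg (by positivity)]
      calc s / m * ‖υ - (m / s) • (c - r)‖ < s / m * ε := by gcongr
        _ ≤ ρ := by rw [div_mul_eq_mul_div, div_le_iff₀ hm]; nlinarith

/-- For the basic Urts function `h(r,υ) = ‖υ‖ κ^D_{r,υ}`, the infimum over `r ∈ D`
of `∫_V h(r,υ) dυ` is strictly positive. -/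
theorem urts_integral_positive (D : Set (EuclideanSpace ℝ (Fin 3)))
    (hne : D.Nonempty) (hopen : IsOpen D) (hbdd : Bornology.IsBounded D)
    (hconv : Convex ℝ D)
    (υmin υmax : ℝ) (h0 : 0 < υmin) (hmm : υmin < υmax)
    (V : Set (EuclideanSpace ℝ (Fin 3)))
    (hV : V = {υ : EuclideanSpace ℝ (Fin 3) | υmin ≤ ‖υ‖ ∧ ‖υ‖ ≤ υmax}) :
    0 < sInf {x : ℝ | ∃ r ∈ D, x = ∫ υ in V, ‖υ‖ * exitTime D r υ} := by
  subst hV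
  obtain ⟨c, hc⟩ := hne
  obtain ⟨ρ, hρ, hball⟩ := isOpen_iff.1 hopen c hc
  obtain ⟨R, hR, hDR⟩ := hbdd.subset_closedBall_lt 0 c
  set m := (υmin + υmax) / 2 with hm_def
  set ε := min ((υmax - υmin) / 2) (ρ * m / R)
  have hm : 0 < m := by linarith
  have hε : 0 < ε := lt_min (by linarith) (div_pos (mul_pos hρ hm) hR)
  have hεm : ε ≤ m := (min_le_left _ _).trans (by linarith)
  have hεR : R * ε ≤ ρ * m := (le_div_iff₀' hR).1 (min_le_right _ _)
  have hvol : 0 < volume.real (ball (0 : EuclideanSpace ℝ (Fin 3)) ε) :=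
    ENNReal.toReal_pos (measure_ball_pos _ _ hε).ne' measure_ball_lt_top.ne
  refine (mul_pos (mul_pos h0 (by positivity : 0 < ρ / (4 * m))) hvol).trans_le
    (le_csInf ⟨_, c, hc, rfl⟩ ?_)
  rintro _ ⟨r, hr, rfl⟩
  obtain ⟨a, ha, t, ht, hat⟩ := exists_add_smul_ball_subset_ball hρ hm (hDR hr) hεm hεR
  calc _ ≤ υmin * t * volume.real (ball a ε) := by
        rw [Measure.addHaar_real_ball_center volume a]
        gcongr
    _ ≤ _ := mul_measureReal_le_integral_norm_mul_exitTime hopen hconv hbdd hr h0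
        (ball_subset_annulus ha (min_le_left _ _)) ((by positivity : 0 < ρ / (4 * m)).trans_le ht)
        fun υ hυ => hball (hat υ hυ)
end
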